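/- arXiv:1507.03225 — 4 statements merged into one kernel-verified Lean document; each statement's English description precedes it below -/
import Mathlib

section
/- Let x, y ∈ {0,1}^d with ||x−y|| ≤ r, and let m : {1,…,d} → F_2^{r+1} be any function. Then there exists a nonzero v ∈ F_2^{r+1} such that x ∧ a(v) = y ∧ a(v), where a(v)_i = [⟨m(i), v⟩ ≠ 0]. That is, the family is r-covering: collision is guaranteed with probability 1 for every pair within Hamming distance r. -/
/-- r-covering guarantee: if `‖x − y‖ ≤ r` then for any `m` there is a nonzero `v` with
`x ∧ a(v) = y ∧ a(v)`, where `a(v)_i = [⟨m(i),v⟩ ≠ 0]`. -/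
theorem stmt6 {d r : ℕ} (m : Fin d → (Fin (r + 1) → ZMod 2))
    (x y : Fin d → Bool) (hxy : hammingDist x y ≤ r) :
    ∃ v : Fin (r + 1) → ZMod 2, v ≠ 0 ∧
      ∀ i, (x i && decide (dotProduct (m i) v ≠ 0))
         = (y i && decide (dotProduct (m i) v ≠ 0)) := by
  classical
  let L : (Fin (r+1) → ZMod 2) →ₗ[ZMod 2] ({i : Fin d // x i ≠ y i} → ZMod 2) :=
    LinearMap.pi (fun s =>
      { toFun := fun v => dotProduct (m s.1) v
        map_add' := by intro a b; simp [dotProduct_add]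
        map_smul' := by intro c a; simp [dotProduct_smul] })
  have hcard : Fintype.card {i : Fin d // x i ≠ y i} ≤ r := by
    have h1 : Fintype.card {i : Fin d // x i ≠ y i} = hammingDist x y := by
      simp [hammingDist, Fintype.card_subtype]
    omega
  have hnotinj : ¬ Function.Injective L := by
    intro h
    have h2 := LinearMap.finrank_le_finrank_of_injective h
    simp only [Module.finrank_pi, Fintype.card_fin] at h2
    omega
  rw [Function.not_injective_iff] at hnotinj
  obtain ⟨a, b, hab, hne⟩ := hnotinj
  refine ⟨a - b, sub_ne_zero.mpr hne, fun i => ?_⟩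
  by_cases hxy' : x i = y i
  · rw [hxy']
  · have hz : L (a - b) ⟨i, hxy'⟩ = 0 := by
      rw [map_sub, hab]; simp
    have : dotProduct (m i) (a - b) = 0 := hz
    simp [this]
end

section
/- Let b, d, q, t, r be positive integers, let r' = ⌊rq/b⌋, let m : {1,…,d} → (F_2^{tr'+1})^t and s : {1,…,d} → Intervals(b,q) be arbitrary functions. Define a(v,k)_i = [s(i) contains k] ∧ [∃ j ∈ {1,…,t}: ⟨m(i)_j, v⟩ ≠ 0 in F_2]. Then for every x ∈ {0,1}^d with ||x|| ≤ r there exist a nonzero v ∈ F_2^{tr'+1} and k ∈ {1,…,b} such that a(v,k) ∧ x = 0. -/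
/-- Covering property of the partitioned construction: with `r' = ⌊rq/b⌋`,
`a(v,k)_i = [k ∈ interval(s i)] ∧ [∃ j ≤ t : ⟨m(i)_j, v⟩ ≠ 0]`, for every `x` of weight
at most `r` there exist a nonzero `v ∈ F_2^{tr'+1}` and `k` with `a(v,k) ∧ x = 0`. -/
theorem stmt10 {d : ℕ} (b q t r : ℕ) (hb : 0 < b) (hq : 0 < q) (ht : 0 < t) (hr : 0 < r)
    (m : Fin d → Fin t → (Fin (t * (r * q / b) + 1) → ZMod 2))
    (s : Fin d → Fin b)
    (x : Fin d → Bool)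
    (hx : (Finset.univ.filter (fun i => x i = true)).card ≤ r) :
    ∃ v : Fin (t * (r * q / b) + 1) → ZMod 2, v ≠ 0 ∧ ∃ k : Fin b,
      ∀ i, ((decide (∃ j : Fin q, ((s i : ℕ) + (j : ℕ)) % b = (k : ℕ)) &&
             decide (∃ j : Fin t, dotProduct (m i j) v ≠ 0)) && x i) = false := by
  classical
  set P : Fin b → Finset (Fin d) := fun k =>
    Finset.univ.filter (fun i => x i = true ∧ ∃ j : Fin q, ((s i : ℕ) + (j:ℕ)) % b = (k:ℕ))
    with hP
  -- total count is at most r * q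
  have hsum : ∑ k : Fin b, (P k).card ≤ r * q := by
    have hswap : ∑ k : Fin b, (P k).card
        = ∑ i : Fin d, ∑ k : Fin b,
            (if x i = true ∧ ∃ j : Fin q, ((s i : ℕ) + (j:ℕ)) % b = (k:ℕ) then 1 else 0) := by
      rw [Finset.sum_comm]
      refine Finset.sum_congr rfl (fun k _ => ?_)
      rw [hP, Finset.card_filter]
    rw [hswap]
    have hinner : ∀ i : Fin d, ∑ k : Fin b,
        (if x i = true ∧ ∃ j : Fin q, ((s i : ℕ) + (j:ℕ)) % b = (k:ℕ) then 1 else 0)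
        ≤ if x i = true then q else 0 := by
      intro i
      by_cases hxi : x i = true
      · simp only [hxi, true_and, if_true]
        have heq : ∑ k : Fin b,
            (if ∃ j : Fin q, ((s i : ℕ) + (j:ℕ)) % b = (k:ℕ) then 1 else 0)
            = (Finset.univ.filter
                (fun k : Fin b => ∃ j : Fin q, ((s i : ℕ) + (j:ℕ)) % b = (k:ℕ))).card := by
          rw [Finset.card_filter]
        rw [heq]
        have hsub : (Finset.univ.filter
              (fun k : Fin b => ∃ j : Fin q, ((s i : ℕ) + (j:ℕ)) % b = (k:ℕ)))
            ⊆ Finset.univ.image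
              (fun j : Fin q => (⟨((s i : ℕ) + (j:ℕ)) % b, Nat.mod_lt _ hb⟩ : Fin b)) := by
          intro k hk
          simp only [Finset.mem_filter, Finset.mem_univ, true_and] at hk
          obtain ⟨j, hj⟩ := hk
          simp only [Finset.mem_image, Finset.mem_univ, true_and]
          exact ⟨j, Fin.ext hj⟩
        calc _ ≤ _ := Finset.card_le_card hsub
          _ ≤ (Finset.univ : Finset (Fin q)).card := Finset.card_image_le
          _ = q := by simp
      · simp [hxi]
    calc ∑ i : Fin d, ∑ k : Fin b,
          (if x i = true ∧ ∃ j : Fin q, ((s i : ℕ) + (j:ℕ)) % b = (k:ℕ) then 1 else 0)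
        ≤ ∑ i : Fin d, (if x i = true then q else 0) :=
          Finset.sum_le_sum (fun i _ => hinner i)
      _ = (Finset.univ.filter (fun i => x i = true)).card * q := by
          rw [← Finset.sum_filter]
          rw [Finset.sum_const, smul_eq_mul]
      _ ≤ r * q := Nat.mul_le_mul_right q hx
  -- pigeonhole: some k with (P k).card ≤ r * q / b
  have hk : ∃ k : Fin b, (P k).card ≤ r * q / b := by
    by_contra h
    push_neg at h
    have hlb : b * (r * q / b + 1) ≤ ∑ k : Fin b, (P k).card := by
      calc b * (r * q / b + 1) = ∑ _k : Fin b, (r * q / b + 1) := by simp [mul_comm]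
        _ ≤ ∑ k : Fin b, (P k).card := Finset.sum_le_sum (fun k _ => h k)
    have h2 : r * q < b * (r * q / b + 1) :=
      ((Nat.div_lt_iff_lt_mul hb).mp (Nat.lt_succ_self (r * q / b))).trans_eq
        (mul_comm _ _)
    omega
  obtain ⟨k, hkcard⟩ := hk
  -- linear algebra: find nonzero v orthogonal to all m i j for i ∈ P k
  set g : (Fin (t * (r * q / b) + 1) → ZMod 2) → ((↥(P k)) × Fin t → ZMod 2) :=
    fun v p => dotProduct (m p.1.1 p.2) v with hg
  have hcard : Fintype.card ((↥(P k)) × Fin t → ZMod 2)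
      < Fintype.card (Fin (t * (r * q / b) + 1) → ZMod 2) := by
    simp only [Fintype.card_fun, Fintype.card_prod, Fintype.card_coe, ZMod.card,
      Fintype.card_fin]
    apply Nat.pow_lt_pow_right (by norm_num)
    have h1 : (P k).card * t ≤ (r * q / b) * t := Nat.mul_le_mul_right t hkcard
    have h2 : (r * q / b) * t = t * (r * q / b) := mul_comm _ _
    omega
  obtain ⟨a, c, hac, hgac⟩ := Fintype.exists_ne_map_eq_of_card_lt g hcard
  refine ⟨a - c, sub_ne_zero.mpr hac, k, ?_⟩
  intro i
  by_cases hxi : x i = true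
  · by_cases hint : ∃ j : Fin q, ((s i : ℕ) + (j:ℕ)) % b = (k:ℕ)
    · have hi : i ∈ P k := by
        rw [hP]
        simp only [Finset.mem_filter, Finset.mem_univ, true_and]
        exact ⟨hxi, hint⟩
      have hdot : ∀ j : Fin t, dotProduct (m i j) (a - c) = 0 := by
        intro j
        have hcong := congrFun hgac (⟨⟨i, hi⟩, j⟩ : (↥(P k)) × Fin t)
        simp only [hg] at hcong
        rw [dotProduct_sub, hcong, sub_self]
      simp [hdot]
    · simp [hint]
  · simp [hxi]
end

section
/- Under uniform random choice of m and s as in the partitioned construction with parameters b, q, t and r' = ⌊rq/b⌋, the expected number of pairs (v,k) with v ∈ F_2^{tr'+1} nonzero and k ∈ {1,…,b} such that x ∧ a(v,k) = y ∧ a(v,k) equals b·(2^{tr'+1} − 1)·(1 − (1 − 2^{−t})q/b)^{||x−y||}, which is strictly less than (1 − (1 − 2^{−t})q/b)^{||x−y||} · b · 2^{trq/b + 1}. -/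
lemma aux_mod (b : ℕ) (x : ℕ) (h : x < 2*b) :
    x % b = if x < b then x else x - b := by
  split_ifs with h'
  · exact Nat.mod_eq_of_lt h'
  · rw [Nat.mod_eq_sub_mod (le_of_not_gt h')]
    exact Nat.mod_eq_of_lt (by omega)

lemma interval_count (b q : ℕ) (hb : 0 < b) (hqb : q ≤ b) (k : Fin b) :
    (Finset.univ.filter (fun a : Fin b =>
        ∃ j : Fin q, ((a : ℕ) + (j : ℕ)) % b = (k : ℕ))).card = q := by
  have key : ∀ (a : Fin b) (j : Fin q),
      (((a : ℕ) + (j : ℕ)) % b = (k : ℕ)) ↔ ((k : ℕ) + b - (j : ℕ)) % b = (a : ℕ) := by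
    intro a j
    have h1 : ((a : ℕ) + (j : ℕ)) < 2*b := by have := a.2; have := j.2; omega
    have h2 : ((k : ℕ) + b - (j : ℕ)) < 2*b := by have := k.2; omega
    rw [aux_mod b _ h1, aux_mod b _ h2]
    have := a.2; have := k.2; have := j.2
    split_ifs <;> omega
  have hinj : Function.Injective
      (fun j : Fin q => (⟨((k : ℕ) + b - (j : ℕ)) % b, Nat.mod_lt _ hb⟩ : Fin b)) := by
    intro j1 j2 h
    have h' := congrArg Fin.val h
    simp only at h'
    have h1 : ((k : ℕ) + b - (j1 : ℕ)) < 2*b := by have := k.2; omega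
    have h2 : ((k : ℕ) + b - (j2 : ℕ)) < 2*b := by have := k.2; omega
    rw [aux_mod b _ h1, aux_mod b _ h2] at h'
    have := k.2; have := j1.2; have := j2.2; have := hqb
    apply Fin.ext
    split_ifs at h' <;> omega
  have himg : Finset.univ.filter (fun a : Fin b =>
        ∃ j : Fin q, ((a : ℕ) + (j : ℕ)) % b = (k : ℕ))
      = Finset.image (fun j : Fin q =>
          (⟨((k : ℕ) + b - (j : ℕ)) % b, Nat.mod_lt _ hb⟩ : Fin b)) Finset.univ := by
    ext a
    simp only [Finset.mem_filter, Finset.mem_univ, true_and, Finset.mem_image]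
    constructor
    · rintro ⟨j, hj⟩
      exact ⟨j, Fin.ext ((key a j).1 hj)⟩
    · rintro ⟨j, hj⟩
      exact ⟨j, (key a j).2 (congrArg Fin.val hj)⟩
  rw [himg, Finset.card_image_of_injective _ hinj, Finset.card_univ, Fintype.card_fin]

lemma ker_half {n : ℕ} (v : Fin n → ZMod 2) (hv : v ≠ 0) :
    (Finset.univ.filter (fun m : Fin n → ZMod 2 => dotProduct m v = 0)).card
      = 2 ^ (n - 1) := by
  obtain ⟨i0, hi0⟩ : ∃ i, v i ≠ 0 := by
    by_contra h; push_neg at h; exact hv (funext h)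
  have hvi : v i0 = 1 := by
    revert hi0; generalize v i0 = z; revert z; decide
  have hcard : (Finset.univ.filter (fun m : Fin n → ZMod 2 => dotProduct m v = 0)).card
      = (Finset.univ.filter (fun m : Fin n → ZMod 2 => ¬ dotProduct m v = 0)).card := by
    apply Finset.card_bij' (fun m _ => m + Pi.single i0 1) (fun m _ => m + Pi.single i0 1)
    · intro m _
      funext i
      by_cases h : i = i0 <;> simp [h, Pi.single_apply]
      · generalize m i0 = z; revert z; decide
    · intro m _
      funext i
      by_cases h : i = i0 <;> simp [h, Pi.single_apply]
      · generalize m i0 = z; revert z; decide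
    · intro m hm
      simp only [Finset.mem_filter, Finset.mem_univ, true_and] at hm ⊢
      rw [add_dotProduct, hm, single_dotProduct, hvi]
      decide
    · intro m hm
      simp only [Finset.mem_filter, Finset.mem_univ, true_and] at hm ⊢
      rw [add_dotProduct, single_dotProduct, hvi]
      revert hm; generalize dotProduct m v = z; revert z; decide
  have htot := Finset.card_filter_add_card_filter_not
    (s := (Finset.univ : Finset (Fin n → ZMod 2)))
    (p := fun m => dotProduct m v = 0)
  have hn : 0 < n := by
    rcases Nat.eq_zero_or_pos n with h | h
    · exfalso; apply hv; subst h; funext i; exact absurd i.2 (by omega)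
    · exact h
  have huniv : (Finset.univ : Finset (Fin n → ZMod 2)).card = 2 ^ n := by
    simp [Finset.card_univ, ZMod.card]
  have h2 : (2:ℕ) ^ n = 2 ^ (n-1) * 2 := by
    rw [← pow_succ]; congr 1; omega
  omega

open Finset in
lemma sumB (b q : ℕ) (hb : 0 < b) (hqb : q ≤ b) (k : Fin b) :
    ∑ a : Fin b, (if (∃ j : Fin q, ((a : ℕ) + (j : ℕ)) % b = (k : ℕ)) then (1:ℝ) else 0)
      = q := by
  rw [Finset.sum_boole, interval_count b q hb hqb k]

open Finset in
lemma sumC {n : ℕ} (t : ℕ) (v : Fin n → ZMod 2) (hv : v ≠ 0) :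
    ∑ w : Fin t → Fin n → ZMod 2,
      (if (∃ j : Fin t, dotProduct (w j) v ≠ 0) then (1:ℝ) else 0)
      = (2:ℝ) ^ (n*t) - (2:ℝ) ^ ((n-1)*t) := by
  have step1 : ∀ w : Fin t → Fin n → ZMod 2,
      (if (∃ j : Fin t, dotProduct (w j) v ≠ 0) then (1:ℝ) else 0)
      = 1 - (if (∀ j, dotProduct (w j) v = 0) then (1:ℝ) else 0) := by
    intro w
    by_cases h : ∀ j, dotProduct (w j) v = 0
    · have h2 : ¬ ∃ j, dotProduct (w j) v ≠ 0 := by push_neg; exact h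
      simp [h, h2]
    · have h2 : ∃ j, dotProduct (w j) v ≠ 0 := by push_neg at h; exact h
      simp [h, h2]
  rw [Finset.sum_congr rfl (fun w _ => step1 w), Finset.sum_sub_distrib, Finset.sum_const]
  have hcardW : (Finset.univ : Finset (Fin t → Fin n → ZMod 2)).card = 2 ^ (n*t) := by
    simp [Finset.card_univ, ZMod.card, pow_mul]
  have hker : ∑ w : Fin t → Fin n → ZMod 2,
      (if (∀ j, dotProduct (w j) v = 0) then (1:ℝ) else 0) = (2:ℝ) ^ ((n-1)*t) := by
    have e1 : ∀ w : Fin t → Fin n → ZMod 2,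
        (if (∀ j, dotProduct (w j) v = 0) then (1:ℝ) else 0)
        = ∏ j : Fin t, (if dotProduct (w j) v = 0 then (1:ℝ) else 0) := by
      intro w
      rw [Finset.prod_boole]
      simp
    rw [Finset.sum_congr rfl (fun w _ => e1 w)]
    have := (Finset.prod_univ_sum (fun _ : Fin t => (Finset.univ : Finset (Fin n → ZMod 2)))
      (fun _ m => (if dotProduct m v = 0 then (1:ℝ) else 0))).symm
    rw [Fintype.piFinset_univ] at this
    rw [this]
    have hm : ∑ m : Fin n → ZMod 2, (if dotProduct m v = 0 then (1:ℝ) else 0)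
        = (2:ℝ) ^ (n-1) := by
      rw [Finset.sum_boole, ker_half v hv]
      push_cast
      ring
    rw [Finset.prod_congr rfl (fun j _ => hm), Finset.prod_const, Finset.card_univ,
      Fintype.card_fin, ← pow_mul]
  rw [hker, hcardW]
  push_cast
  ring

open scoped Classical in
lemma coord (b q t n : ℕ) (hb : 0 < b) (hqb : q ≤ b)
    (v : Fin n → ZMod 2) (hv : v ≠ 0) (k : Fin b) (xb yb : Bool) :
    ∑ a : Fin b, ∑ w : Fin t → Fin n → ZMod 2,
      (if ((xb && (decide (∃ j : Fin q, ((a : ℕ) + (j : ℕ)) % b = (k : ℕ)) &&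
                   decide (∃ j : Fin t, dotProduct (w j) v ≠ 0)))
          = (yb && (decide (∃ j : Fin q, ((a : ℕ) + (j : ℕ)) % b = (k : ℕ)) &&
                   decide (∃ j : Fin t, dotProduct (w j) v ≠ 0))))
        then (1:ℝ) else 0)
      = if xb = yb then (b:ℝ) * 2^(n*t)
        else (b:ℝ) * 2^(n*t) - (q:ℝ) * ((2:ℝ)^(n*t) - (2:ℝ)^((n-1)*t)) := by
  by_cases hxy : xb = yb
  · rw [if_pos hxy]
    subst hxy
    simp only [if_pos rfl, Finset.sum_const, Finset.card_univ, nsmul_eq_mul, mul_one]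
    simp [ZMod.card, pow_mul, Fintype.card_fun]
  · rw [if_neg hxy]
    have hcond : ∀ (A : Bool), ((xb && A) = (yb && A)) ↔ A = false := by
      intro A; cases A <;> cases xb <;> cases yb <;> simp_all
    have hstep : ∀ (a : Fin b) (w : Fin t → Fin n → ZMod 2),
        (if ((xb && (decide (∃ j : Fin q, ((a : ℕ) + (j : ℕ)) % b = (k : ℕ)) &&
                   decide (∃ j : Fin t, dotProduct (w j) v ≠ 0)))
          = (yb && (decide (∃ j : Fin q, ((a : ℕ) + (j : ℕ)) % b = (k : ℕ)) &&
                   decide (∃ j : Fin t, dotProduct (w j) v ≠ 0))))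
        then (1:ℝ) else 0)
        = 1 - (if (∃ j : Fin q, ((a : ℕ) + (j : ℕ)) % b = (k : ℕ)) then (1:ℝ) else 0) *
              (if (∃ j : Fin t, dotProduct (w j) v ≠ 0) then (1:ℝ) else 0) := by
      intro a w
      rw [if_congr (hcond _) rfl rfl]
      by_cases hB : ∃ j : Fin q, ((a : ℕ) + (j : ℕ)) % b = (k : ℕ) <;>
        by_cases hC : ∃ j : Fin t, dotProduct (w j) v ≠ 0 <;>
        simp [hB, hC]
    rw [Finset.sum_congr rfl (fun a _ => Finset.sum_congr rfl (fun w _ => hstep a w))]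
    have hsplit : ∀ a : Fin b,
        ∑ w : Fin t → Fin n → ZMod 2,
          (1 - (if (∃ j : Fin q, ((a : ℕ) + (j : ℕ)) % b = (k : ℕ)) then (1:ℝ) else 0) *
              (if (∃ j : Fin t, dotProduct (w j) v ≠ 0) then (1:ℝ) else 0))
        = (2:ℝ)^(n*t) -
            (if (∃ j : Fin q, ((a : ℕ) + (j : ℕ)) % b = (k : ℕ)) then (1:ℝ) else 0) *
            ((2:ℝ)^(n*t) - (2:ℝ)^((n-1)*t)) := by
      intro a
      rw [Finset.sum_sub_distrib, Finset.sum_const, ← Finset.mul_sum, sumC t v hv]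
      have : (Finset.univ : Finset (Fin t → Fin n → ZMod 2)).card = 2 ^ (n*t) := by
        simp [Finset.card_univ, ZMod.card, pow_mul, Fintype.card_fun]
      rw [this]
      push_cast
      ring
    rw [Finset.sum_congr rfl (fun a _ => hsplit a), Finset.sum_sub_distrib,
      Finset.sum_const, ← Finset.sum_mul, sumB b q hb hqb k, Finset.card_univ,
      Fintype.card_fin]
    push_cast
    ring

open scoped Classical in
lemma master {d : ℕ} (b q t n : ℕ) (hb : 0 < b) (hqb : q ≤ b) (hn : 0 < n)
    (x y : Fin d → Bool) :
    (∑ ms : (Fin d → Fin b) × (Fin d → Fin t → (Fin n → ZMod 2)),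
        ((Finset.univ.filter
          (fun vk : (Fin n → ZMod 2) × Fin b => vk.1 ≠ 0 ∧
            ∀ i,
              (x i && (decide (∃ j : Fin q, ((ms.1 i : ℕ) + (j : ℕ)) % b = (vk.2 : ℕ)) &&
                       decide (∃ j : Fin t, dotProduct (ms.2 i j) vk.1 ≠ 0)))
            = (y i && (decide (∃ j : Fin q, ((ms.1 i : ℕ) + (j : ℕ)) % b = (vk.2 : ℕ)) &&
                       decide (∃ j : Fin t, dotProduct (ms.2 i j) vk.1 ≠ 0))))).card : ℝ))
      / (Fintype.card
          ((Fin d → Fin b) × (Fin d → Fin t → (Fin n → ZMod 2))))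
      = (b : ℝ) * ((2 : ℝ) ^ n - 1) *
          (1 - (1 - (2 : ℝ) ^ (-(t : ℤ))) * q / b) ^ (hammingDist x y) := by
  have hnt : (n - 1) * t + t = n * t := by
    have h' : n - 1 + 1 = n := Nat.succ_pred_eq_of_pos hn
    calc (n-1)*t + t = ((n-1)+1)*t := by ring
      _ = n*t := by rw [h']
  set H := hammingDist x y with hH
  set p : ℝ := 1 - (1 - (2 : ℝ) ^ (-(t : ℤ))) * q / b with hp
  set K : ℝ := (b:ℝ) * 2^(n*t) with hK
  set c0 : ℝ := (b:ℝ) * 2^(n*t) - (q:ℝ) * ((2:ℝ)^(n*t) - (2:ℝ)^((n-1)*t)) with hc0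
  -- basic facts
  have hKpos : (0:ℝ) < K := by
    apply mul_pos
    · exact_mod_cast hb
    · positivity
  have hc0K : c0 = K * p := by
    have h2t : ((2:ℝ) ^ (-(t:ℤ))) = ((2:ℝ)^t)⁻¹ := by
      rw [zpow_neg, zpow_natCast]
    have hsplit : (2:ℝ)^(n*t) = (2:ℝ)^((n-1)*t) * (2:ℝ)^t := by
      rw [← pow_add, hnt]
    rw [hc0, hK, hp, h2t, hsplit]
    have hbne : (b:ℝ) ≠ 0 := by exact_mod_cast hb.ne'
    have h2ne : ((2:ℝ)^t) ≠ 0 := by positivity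
    field_simp
  -- Step A: turn card into double sum and swap
  have hnum : (∑ ms : (Fin d → Fin b) × (Fin d → Fin t → (Fin n → ZMod 2)),
        ((Finset.univ.filter
          (fun vk : (Fin n → ZMod 2) × Fin b => vk.1 ≠ 0 ∧
            ∀ i,
              (x i && (decide (∃ j : Fin q, ((ms.1 i : ℕ) + (j : ℕ)) % b = (vk.2 : ℕ)) &&
                       decide (∃ j : Fin t, dotProduct (ms.2 i j) vk.1 ≠ 0)))
            = (y i && (decide (∃ j : Fin q, ((ms.1 i : ℕ) + (j : ℕ)) % b = (vk.2 : ℕ)) &&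
                       decide (∃ j : Fin t, dotProduct (ms.2 i j) vk.1 ≠ 0))))).card : ℝ))
      = ∑ vk : (Fin n → ZMod 2) × Fin b,
          ∑ ms : (Fin d → Fin b) × (Fin d → Fin t → (Fin n → ZMod 2)),
          (if (vk.1 ≠ 0 ∧
            ∀ i,
              (x i && (decide (∃ j : Fin q, ((ms.1 i : ℕ) + (j : ℕ)) % b = (vk.2 : ℕ)) &&
                       decide (∃ j : Fin t, dotProduct (ms.2 i j) vk.1 ≠ 0)))
            = (y i && (decide (∃ j : Fin q, ((ms.1 i : ℕ) + (j : ℕ)) % b = (vk.2 : ℕ)) &&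
                       decide (∃ j : Fin t, dotProduct (ms.2 i j) vk.1 ≠ 0))))
            then (1:ℝ) else 0) := by
    rw [Finset.sum_comm]
    apply Finset.sum_congr rfl
    intro ms _
    rw [Finset.card_filter]
    push_cast
    rfl
  rw [hnum]
  -- inner sum for a fixed (v,k)
  have hinner : ∀ vk : (Fin n → ZMod 2) × Fin b,
      (∑ ms : (Fin d → Fin b) × (Fin d → Fin t → (Fin n → ZMod 2)),
          (if (vk.1 ≠ 0 ∧
            ∀ i,
              (x i && (decide (∃ j : Fin q, ((ms.1 i : ℕ) + (j : ℕ)) % b = (vk.2 : ℕ)) &&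
                       decide (∃ j : Fin t, dotProduct (ms.2 i j) vk.1 ≠ 0)))
            = (y i && (decide (∃ j : Fin q, ((ms.1 i : ℕ) + (j : ℕ)) % b = (vk.2 : ℕ)) &&
                       decide (∃ j : Fin t, dotProduct (ms.2 i j) vk.1 ≠ 0))))
            then (1:ℝ) else 0))
      = if vk.1 ≠ 0 then ∏ i : Fin d, (if x i = y i then K else c0) else 0 := by
    intro vk
    by_cases hv : vk.1 ≠ 0
    · rw [if_pos hv]
      have e0 : ∀ ms : (Fin d → Fin b) × (Fin d → Fin t → (Fin n → ZMod 2)),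
          (if (vk.1 ≠ 0 ∧
            ∀ i,
              (x i && (decide (∃ j : Fin q, ((ms.1 i : ℕ) + (j : ℕ)) % b = (vk.2 : ℕ)) &&
                       decide (∃ j : Fin t, dotProduct (ms.2 i j) vk.1 ≠ 0)))
            = (y i && (decide (∃ j : Fin q, ((ms.1 i : ℕ) + (j : ℕ)) % b = (vk.2 : ℕ)) &&
                       decide (∃ j : Fin t, dotProduct (ms.2 i j) vk.1 ≠ 0))))
            then (1:ℝ) else 0)
          = ∏ i : Fin d,
              (if ((x i && (decide (∃ j : Fin q, ((ms.1 i : ℕ) + (j : ℕ)) % b = (vk.2 : ℕ)) &&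
                       decide (∃ j : Fin t, dotProduct (ms.2 i j) vk.1 ≠ 0)))
            = (y i && (decide (∃ j : Fin q, ((ms.1 i : ℕ) + (j : ℕ)) % b = (vk.2 : ℕ)) &&
                       decide (∃ j : Fin t, dotProduct (ms.2 i j) vk.1 ≠ 0))))
                then (1:ℝ) else 0) := by
        intro ms
        rw [Finset.prod_boole]
        simp [hv]
      rw [Finset.sum_congr rfl (fun ms _ => e0 ms), Fintype.sum_prod_type]
      have e1 : ∀ m1 : Fin d → Fin b,
          (∑ m2 : Fin d → Fin t → Fin n → ZMod 2, ∏ i : Fin d,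
            (if ((x i && (decide (∃ j : Fin q, ((m1 i : ℕ) + (j : ℕ)) % b = (vk.2 : ℕ)) &&
                       decide (∃ j : Fin t, dotProduct (m2 i j) vk.1 ≠ 0)))
            = (y i && (decide (∃ j : Fin q, ((m1 i : ℕ) + (j : ℕ)) % b = (vk.2 : ℕ)) &&
                       decide (∃ j : Fin t, dotProduct (m2 i j) vk.1 ≠ 0))))
                then (1:ℝ) else 0))
          = ∏ i : Fin d, ∑ w : Fin t → Fin n → ZMod 2,
            (if ((x i && (decide (∃ j : Fin q, ((m1 i : ℕ) + (j : ℕ)) % b = (vk.2 : ℕ)) &&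
                       decide (∃ j : Fin t, dotProduct (w j) vk.1 ≠ 0)))
            = (y i && (decide (∃ j : Fin q, ((m1 i : ℕ) + (j : ℕ)) % b = (vk.2 : ℕ)) &&
                       decide (∃ j : Fin t, dotProduct (w j) vk.1 ≠ 0))))
                then (1:ℝ) else 0) := by
        intro m1
        have h := Finset.prod_univ_sum
          (fun _ : Fin d => (Finset.univ : Finset (Fin t → Fin n → ZMod 2)))
          (fun i w =>
            (if ((x i && (decide (∃ j : Fin q, ((m1 i : ℕ) + (j : ℕ)) % b = (vk.2 : ℕ)) &&
                       decide (∃ j : Fin t, dotProduct (w j) vk.1 ≠ 0)))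
            = (y i && (decide (∃ j : Fin q, ((m1 i : ℕ) + (j : ℕ)) % b = (vk.2 : ℕ)) &&
                       decide (∃ j : Fin t, dotProduct (w j) vk.1 ≠ 0))))
                then (1:ℝ) else 0))
        rw [Fintype.piFinset_univ] at h
        exact h.symm
      rw [Finset.sum_congr rfl (fun m1 _ => e1 m1)]
      have h2 := Finset.prod_univ_sum
        (fun _ : Fin d => (Finset.univ : Finset (Fin b)))
        (fun i a => ∑ w : Fin t → Fin n → ZMod 2,
            (if ((x i && (decide (∃ j : Fin q, ((a : ℕ) + (j : ℕ)) % b = (vk.2 : ℕ)) &&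
                       decide (∃ j : Fin t, dotProduct (w j) vk.1 ≠ 0)))
            = (y i && (decide (∃ j : Fin q, ((a : ℕ) + (j : ℕ)) % b = (vk.2 : ℕ)) &&
                       decide (∃ j : Fin t, dotProduct (w j) vk.1 ≠ 0))))
                then (1:ℝ) else 0))
      rw [Fintype.piFinset_univ] at h2
      rw [← h2]
      apply Finset.prod_congr rfl
      intro i _
      exact coord b q t n hb hqb vk.1 hv vk.2 (x i) (y i)
    · rw [if_neg hv]
      apply Finset.sum_eq_zero
      intro ms _
      rw [if_neg]
      tauto
  rw [Finset.sum_congr rfl (fun vk _ => hinner vk)]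
  rw [Fintype.sum_prod_type]
  set S : ℝ := ∏ i : Fin d, (if x i = y i then K else c0) with hSdef
  have hout : ∀ v : Fin n → ZMod 2,
      ∑ _k : Fin b, (if v ≠ 0 then S else 0) = (b:ℝ) * (if v ≠ 0 then S else 0) := by
    intro v
    rw [Finset.sum_const, Finset.card_univ, Fintype.card_fin, nsmul_eq_mul]
  rw [Finset.sum_congr rfl (fun v _ => hout v), ← Finset.mul_sum]
  rw [Finset.sum_ite, Finset.sum_const, Finset.sum_const_zero, add_zero,
    Finset.filter_ne', Finset.card_erase_of_mem (Finset.mem_univ _), Finset.card_univ]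
  have hcV : Fintype.card (Fin n → ZMod 2) = 2^n := by
    simp [ZMod.card]
  rw [hcV, nsmul_eq_mul, Nat.cast_sub Nat.one_le_two_pow]
  push_cast
  -- denominator
  have hD : ((Fintype.card
      ((Fin d → Fin b) × (Fin d → Fin t → Fin n → ZMod 2)) : ℕ) : ℝ) = K ^ d := by
    rw [hK]
    simp only [Fintype.card_prod, Fintype.card_fun, Fintype.card_fin, ZMod.card]
    push_cast
    rw [mul_pow, ← pow_mul, ← pow_mul, ← pow_mul]
    ring
  rw [hD]
  -- the product S
  have hdH : H ≤ d := by
    rw [hH]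
    have h := hammingDist_le_card_fintype (x := x) (y := y)
    simpa using h
  have hScard : S = K ^ (d - H) * c0 ^ H := by
    rw [hSdef, Finset.prod_ite (fun _ => K) (fun _ => c0), Finset.prod_const,
      Finset.prod_const]
    have hHc : (Finset.univ.filter (fun i => ¬ x i = y i)).card = H := by
      rw [hH]
      simp [hammingDist, Finset.filter_congr_decidable]
    have htotc := Finset.card_filter_add_card_filter_not
      (s := (Finset.univ : Finset (Fin d))) (p := fun i => x i = y i)
    rw [Finset.card_univ, Fintype.card_fin] at htotc
    have hEc : (Finset.univ.filter (fun i => x i = y i)).card = d - H := by omega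
    rw [hHc, hEc]
  clear_value K c0 p S
  rw [hScard, hc0K, mul_pow, div_eq_iff (pow_ne_zero d hKpos.ne')]
  rw [show K ^ d = K ^ (d - H) * K ^ H by rw [← pow_add, Nat.sub_add_cancel hdH]]
  ring


open scoped Classical in
/-- Expected number of colliding pairs `(v,k)` in the partitioned construction:
it equals `b(2^{tr'+1} − 1)(1 − (1 − 2^{−t})q/b)^{‖x−y‖}`, which is strictly less than
`(1 − (1 − 2^{−t})q/b)^{‖x−y‖} · b · 2^{trq/b + 1}` (real exponent `trq/b`). -/
theorem stmt12 {d : ℕ} (b q t r : ℕ) (hb : 0 < b) (hqb : q ≤ b) (hq : 0 < q) (ht : 0 < t)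
    (x y : Fin d → Bool) :
    (∑ ms : (Fin d → Fin b) × (Fin d → Fin t → (Fin (t * (r * q / b) + 1) → ZMod 2)),
        ((Finset.univ.filter
          (fun vk : (Fin (t * (r * q / b) + 1) → ZMod 2) × Fin b => vk.1 ≠ 0 ∧
            ∀ i,
              (x i && (decide (∃ j : Fin q, ((ms.1 i : ℕ) + (j : ℕ)) % b = (vk.2 : ℕ)) &&
                       decide (∃ j : Fin t, dotProduct (ms.2 i j) vk.1 ≠ 0)))
            = (y i && (decide (∃ j : Fin q, ((ms.1 i : ℕ) + (j : ℕ)) % b = (vk.2 : ℕ)) &&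
                       decide (∃ j : Fin t, dotProduct (ms.2 i j) vk.1 ≠ 0))))).card : ℝ))
      / (Fintype.card
          ((Fin d → Fin b) × (Fin d → Fin t → (Fin (t * (r * q / b) + 1) → ZMod 2))))
      = (b : ℝ) * ((2 : ℝ) ^ (t * (r * q / b) + 1) - 1) *
          (1 - (1 - (2 : ℝ) ^ (-(t : ℤ))) * q / b) ^ (hammingDist x y) ∧
    (b : ℝ) * ((2 : ℝ) ^ (t * (r * q / b) + 1) - 1) *
        (1 - (1 - (2 : ℝ) ^ (-(t : ℤ))) * q / b) ^ (hammingDist x y)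
      < (1 - (1 - (2 : ℝ) ^ (-(t : ℤ))) * q / b) ^ (hammingDist x y) * (b : ℝ) *
          (2 : ℝ) ^ (((t * r * q : ℕ) : ℝ) / (b : ℝ) + 1) := by
  constructor
  · exact master b q t (t * (r * q / b) + 1) hb hqb (Nat.succ_pos _) x y
  · set H := hammingDist x y with hH
    set p : ℝ := 1 - (1 - (2 : ℝ) ^ (-(t : ℤ))) * q / b with hp
    have hbR : (0:ℝ) < b := by exact_mod_cast hb
    have h2t0 : (0:ℝ) < (2:ℝ) ^ (-(t:ℤ)) := by positivity
    have h2t1 : (2:ℝ) ^ (-(t:ℤ)) ≤ 1 := by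
      rw [zpow_neg, zpow_natCast]
      exact inv_le_one_of_one_le₀ (one_le_pow₀ one_le_two)
    have hq0 : (0:ℝ) ≤ (q:ℝ)/b := by positivity
    have hq1 : (q:ℝ)/b ≤ 1 := by
      rw [div_le_one hbR]
      exact_mod_cast hqb
    have hppos : (0:ℝ) < p := by
      rw [hp, mul_div_assoc]
      nlinarith
    have hppow : (0:ℝ) < p ^ H := pow_pos hppos H
    have hexp : ((t * (r * q / b) + 1 : ℕ) : ℝ) ≤ ((t * r * q : ℕ) : ℝ) / (b : ℝ) + 1 := by
      have h1 : ((r * q / b : ℕ) : ℝ) ≤ ((r * q : ℕ) : ℝ) / (b : ℝ) := Nat.cast_div_le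
      push_cast at h1 ⊢
      have h2 := mul_le_mul_of_nonneg_left h1 (show (0:ℝ) ≤ (t:ℝ) by positivity)
      have e : (t:ℝ) * ((r:ℝ)*q/b) = (t:ℝ)*r*q/b := by ring
      rw [e] at h2
      linarith
    have hkey : (2:ℝ) ^ (t * (r * q / b) + 1) - 1
        < (2:ℝ) ^ (((t * r * q : ℕ) : ℝ) / (b : ℝ) + 1) := by
      have e1 : (2:ℝ) ^ (t * (r * q / b) + 1)
          = (2:ℝ) ^ (((t * (r * q / b) + 1 : ℕ) : ℝ)) := (Real.rpow_natCast 2 _).symm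
      have e2 : (2:ℝ) ^ (((t * (r * q / b) + 1 : ℕ) : ℝ))
          ≤ (2:ℝ) ^ (((t * r * q : ℕ) : ℝ) / (b : ℝ) + 1) :=
        (Real.rpow_le_rpow_left_iff one_lt_two).mpr hexp
      rw [e1]
      linarith
    calc (b : ℝ) * ((2 : ℝ) ^ (t * (r * q / b) + 1) - 1) * p ^ H
        = ((b:ℝ) * p ^ H) * ((2 : ℝ) ^ (t * (r * q / b) + 1) - 1) := by ring
      _ < ((b:ℝ) * p ^ H) * ((2:ℝ) ^ (((t * r * q : ℕ) : ℝ) / (b : ℝ) + 1)) :=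
          mul_lt_mul_of_pos_left hkey (mul_pos hbR hppow)
      _ = p ^ H * (b : ℝ) * (2 : ℝ) ^ (((t * r * q : ℕ) : ℝ) / (b : ℝ) + 1) := by ring
end

section
/- Let n, c, r be such that c > 1, cr is a positive integer, and set t = ⌈log₂(n)/(cr)⌉ with b = q = 1. Then the family size satisfies 2^{tr+1} − 1 < 2^{r+1}·n^{1/c}, and for any set S_far of at most n vectors each at Hamming distance greater than cr from the query y, the expected total number of collisions is less than n·2^{−tcr}·2^{tr+1} ≤ 2^{r+1}·n^{1/c}. -/
/-- Parameter choice `b = q = 1`, `t = ⌈log₂(n)/(cr)⌉`: the family size satisfies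
`2^{tr+1} − 1 < 2^{r+1}·n^{1/c}`, and the expected collision bound
`n·2^{−tcr}·2^{tr+1} ≤ 2^{r+1}·n^{1/c}` holds. -/
theorem stmt13 (n r cr t : ℕ) (c : ℝ) (hc : 1 < c) (hn : 1 ≤ n)
    (hcr0 : 0 < cr) (hcr : (cr : ℝ) = c * r)
    (ht : t = ⌈Real.logb 2 n / (cr : ℝ)⌉₊) :
    (2 : ℝ) ^ (t * r + 1) - 1 < 2 ^ (r + 1) * (n : ℝ) ^ (1 / c) ∧
    (n : ℝ) * (2 : ℝ) ^ (-(t * cr : ℤ)) * 2 ^ (t * r + 1)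
      ≤ 2 ^ (r + 1) * (n : ℝ) ^ (1 / c) := by
  have hc0 : (0:ℝ) < c := lt_trans one_pos hc
  have hn0 : (0:ℝ) < (n:ℝ) := by exact_mod_cast hn
  set L := Real.logb 2 (n:ℝ) with hLdef
  have hL0 : 0 ≤ L := Real.logb_nonneg one_lt_two (by exact_mod_cast hn)
  have hcrpos : (0:ℝ) < (cr:ℝ) := by exact_mod_cast hcr0
  have hn2 : (2:ℝ) ^ L = (n:ℝ) := Real.rpow_logb two_pos (by norm_num) hn0
  -- t ≤ L/cr + 1
  have htle : (t:ℝ) ≤ L / (cr:ℝ) + 1 := by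
    rw [ht]; exact (Nat.ceil_lt_add_one (by positivity)).le
  have h1 : (t:ℝ) * cr ≤ L + cr := by
    have := mul_le_mul_of_nonneg_right htle hcrpos.le
    rwa [add_mul, one_mul, div_mul_cancel₀ _ hcrpos.ne'] at this
  -- L ≤ t*cr
  have htge : L ≤ (t:ℝ) * cr := by
    have h := Nat.le_ceil (L / (cr:ℝ))
    rw [← ht] at h
    have := mul_le_mul_of_nonneg_right h hcrpos.le
    rwa [div_mul_cancel₀ _ hcrpos.ne'] at this
  -- t*r ≤ r + L/c
  have h2tr : (t:ℝ) * r ≤ r + L / c := by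
    rw [← mul_le_mul_iff_right₀ hc0]
    have hx : c * ((r:ℝ) + L / c) = c * r + L := by field_simp
    rw [hx]
    rw [hcr] at h1
    nlinarith [h1]
  -- 2^(t*r) ≤ 2^r * n^(1/c)
  have hpow : (2:ℝ) ^ (t * r) ≤ 2 ^ r * (n:ℝ) ^ (1 / c) := by
    have hmono : (2:ℝ) ^ (((t * r : ℕ)):ℝ) ≤ (2:ℝ) ^ ((r:ℝ) + L / c) :=
      Real.rpow_le_rpow_of_exponent_le one_le_two (by push_cast; linarith)
    rw [Real.rpow_natCast] at hmono
    have hrhs : (2:ℝ) ^ ((r:ℝ) + L / c) = 2 ^ r * (n:ℝ) ^ (1 / c) := by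
      rw [Real.rpow_add two_pos, Real.rpow_natCast]
      congr 1
      rw [div_eq_mul_one_div L c, Real.rpow_mul (by norm_num) L, hn2]
    rwa [hrhs] at hmono
  have hfam : (2:ℝ) ^ (t * r + 1) ≤ 2 ^ (r + 1) * (n:ℝ) ^ (1 / c) := by
    rw [pow_succ, pow_succ]
    calc (2:ℝ) ^ (t * r) * 2 ≤ (2 ^ r * (n:ℝ) ^ (1 / c)) * 2 := by
          have : (0:ℝ) ≤ 2 := by norm_num
          nlinarith [hpow]
      _ = 2 ^ r * 2 * (n:ℝ) ^ (1 / c) := by ring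
  constructor
  · linarith [hfam]
  · -- n * 2^(-(t*cr)) ≤ 1
    have hz : (2:ℝ) ^ (-(t * cr : ℤ)) = ((2:ℝ) ^ (t * cr : ℕ))⁻¹ := by
      rw [zpow_neg]
      norm_cast
    have hge : (n:ℝ) ≤ (2:ℝ) ^ (t * cr : ℕ) := by
      have : (2:ℝ) ^ L ≤ (2:ℝ) ^ (((t * cr : ℕ)):ℝ) :=
        Real.rpow_le_rpow_of_exponent_le one_le_two (by push_cast; linarith)
      rw [hn2, Real.rpow_natCast] at this
      exact this
    have hle1 : (n:ℝ) * (2:ℝ) ^ (-(t * cr : ℤ)) ≤ 1 := by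
      rw [hz]
      have hp : (0:ℝ) < (2:ℝ) ^ (t * cr : ℕ) := by positivity
      rw [mul_inv_le_iff₀ hp, one_mul]
      exact hge
    have hnonneg : (0:ℝ) ≤ (2:ℝ) ^ (t * r + 1) := by positivity
    calc (n:ℝ) * (2:ℝ) ^ (-(t * cr : ℤ)) * 2 ^ (t * r + 1)
        ≤ 1 * 2 ^ (t * r + 1) := by
          apply mul_le_mul_of_nonneg_right hle1 hnonneg
      _ = 2 ^ (t * r + 1) := one_mul _
      _ ≤ _ := hfam
end
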